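/- The SL(2,ℂ)-orbit of the Lagrangian span{X³, X²Y} is exactly the set of Lagrangians W of V for which there exists [a:b] ∈ ℂℙ¹ such that (bX−aY)² divides every element of W (equivalently, all elements of W share a common double root). -/

import Mathlib

noncomputable section

open MvPolynomial

/-- The polynomial ring `ℂ[X,Y]`. -/
abbrev P2 : Type := MvPolynomial (Fin 2) ℂ

/-- The variable `X`. -/
def Xv : P2 := X 0

/-- The variable `Y`. -/
def Yv : P2 := X 1

/-- `V`: the space of homogeneous cubic polynomials in `X, Y`. -/
def Vcubic : Submodule ℂ P2 := homogeneousSubmodule (Fin 2) ℂ 3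

/-- The coefficient of `X^i Y^j`. -/
def cf (i j : ℕ) (p : P2) : ℂ := coeff (Finsupp.single 0 i + Finsupp.single 1 j) p

/-- The alternating bilinear form `ω` with `ω(X³,Y³) = 1`, `ω(X²Y,XY²) = -1/3`,
all other pairings of distinct basis vectors being `0`. -/
def omegaForm (p q : P2) : ℂ :=
  cf 3 0 p * cf 0 3 q - cf 0 3 p * cf 3 0 q
    - (1 / 3) * (cf 2 1 p * cf 1 2 q - cf 1 2 p * cf 2 1 q)

/-- The linear form `b X - a Y` associated to the point `[a : b] ∈ ℂℙ¹`. -/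
def lf (a b : ℂ) : P2 := C b * Xv - C a * Yv

/-- A Lagrangian of `V`: a 2-dimensional subspace contained in `V` on which `ω` vanishes. -/
def IsLagrangian (W : Submodule ℂ P2) : Prop :=
  W ≤ Vcubic ∧ Module.finrank ℂ W = 2 ∧ ∀ p ∈ W, ∀ q ∈ W, omegaForm p q = 0

/-- A perfect cube: a nonzero element of the form `c • (bX - aY)³`. -/
def IsPerfectCube (p : P2) : Prop :=
  ∃ c a b : ℂ, c ≠ 0 ∧ (a ≠ 0 ∨ b ≠ 0) ∧ p = C c * lf a b ^ 3

/-- The action of `SL(2,ℂ)` on `ℂ[X,Y]` by linear substitution of the variables. -/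
def subst (g : Matrix.SpecialLinearGroup (Fin 2) ℂ) : P2 →ₐ[ℂ] P2 :=
  aeval (fun i => C (g.1 i 0) * Xv + C (g.1 i 1) * Yv)

/-- The induced action of `SL(2,ℂ)` on subspaces of `ℂ[X,Y]`. -/
def mapAct (g : Matrix.SpecialLinearGroup (Fin 2) ℂ) (W : Submodule ℂ P2) :
    Submodule ℂ P2 :=
  W.map (subst g).toLinearMap

/-- The `SL(2,ℂ)`-orbit of a subspace. -/
def slOrbit (W₀ : Submodule ℂ P2) : Set (Submodule ℂ P2) := {W | ∃ g, W = mapAct g W₀}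

/-- The Lagrangian `span{X³, X²Y}`. -/
def L₁ : Submodule ℂ P2 := Submodule.span ℂ {Xv ^ 3, Xv ^ 2 * Yv}

/-- The Lagrangian `span{X³, XY²}`. -/
def L₂ : Submodule ℂ P2 := Submodule.span ℂ {Xv ^ 3, Xv * Yv ^ 2}

/-- The Lagrangian `span{X²Y, X³ + Y³}`. -/
def L₃ : Submodule ℂ P2 := Submodule.span ℂ {Xv ^ 2 * Yv, Xv ^ 3 + Yv ^ 3}
/-!
Substituting `g ∈ SL(2,ℂ)` sends `span{X³, X²Y} = X² · V₁` (with `V₁` the linear forms) onto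
`l² · V₁` for `l = g·X`, and every nonzero linear form is of the form `g·X`. The space `l² · V₁`
is two-dimensional, consists of cubics, and is isotropic because `ω(l²X, l²Y) = 0`. Conversely, if
`l²` divides every element of a Lagrangian `W`, the cofactor of a cubic can be taken to be a
linear form, so `W ≤ l² · V₁`, and equality follows from the dimensions.
-/

theorem MvPolynomial.IsHomogeneous.homogeneousComponent_add_mul {σ R : Type*} [CommSemiring R]
    {φ : MvPolynomial σ R} {m : ℕ} (hφ : φ.IsHomogeneous m) (n : ℕ) (ψ : MvPolynomial σ R) :
    homogeneousComponent (m + n) (φ * ψ) = φ * homogeneousComponent n ψ := by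
  conv_lhs => rw [← sum_homogeneousComponent ψ, Finset.mul_sum, map_sum]
  have hterm (i : ℕ) : homogeneousComponent (m + n) (φ * homogeneousComponent i ψ) =
      if i = n then φ * homogeneousComponent n ψ else 0 := by
    rw [homogeneousComponent_of_mem (hφ.mul (homogeneousComponent_isHomogeneous i ψ))]
    split_ifs <;> first | subst_vars; rfl | omega
  simp only [hterm, Finset.sum_ite_eq', Finset.mem_range]
  split_ifs with h
  · rfl
  · rw [homogeneousComponent_eq_zero _ _ (by omega), mul_zero]

theorem cf_add (i j : ℕ) (p q : P2) : cf i j (p + q) = cf i j p + cf i j q := coeff_add _ _ _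

theorem cf_smul (i j : ℕ) (s : ℂ) (p : P2) : cf i j (s • p) = s * cf i j p := coeff_smul _ _ _

theorem cf_C_mul_X_pow_mul_Y_pow (c : ℂ) (i j k l : ℕ) :
    cf i j (C c * (Xv ^ k * Yv ^ l)) = if k = i ∧ l = j then c else 0 := by
  rw [cf, Xv, Yv, X_pow_eq_monomial, X_pow_eq_monomial, monomial_mul, one_mul, C_mul_monomial,
    mul_one, coeff_monomial]
  simp [Finsupp.ext_iff, Fin.forall_fin_two]

def cubic (c₃ c₂ c₁ c₀ : ℂ) : P2 :=
  C c₃ * Xv ^ 3 + C c₂ * (Xv ^ 2 * Yv) + C c₁ * (Xv * Yv ^ 2) + C c₀ * Yv ^ 3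

theorem omegaForm_cubic (a₃ a₂ a₁ a₀ b₃ b₂ b₁ b₀ : ℂ) :
    omegaForm (cubic a₃ a₂ a₁ a₀) (cubic b₃ b₂ b₁ b₀) =
      a₃ * b₀ - a₀ * b₃ - 1 / 3 * (a₂ * b₁ - a₁ * b₂) := by
  have hcubic (c₃ c₂ c₁ c₀ : ℂ) : cubic c₃ c₂ c₁ c₀ = C c₃ * (Xv ^ 3 * Yv ^ 0) +
      C c₂ * (Xv ^ 2 * Yv ^ 1) + C c₁ * (Xv ^ 1 * Yv ^ 2) + C c₀ * (Xv ^ 0 * Yv ^ 3) := by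
    simp [cubic]
  simp only [omegaForm, hcubic, cf_add, cf_C_mul_X_pow_mul_Y_pow]
  norm_num

theorem omegaForm_smul_add_smul (x y : P2) (s t s' t' : ℂ) :
    omegaForm (s • x + t • y) (s' • x + t' • y) = (s * t' - t * s') * omegaForm x y := by
  simp only [omegaForm, cf_add, cf_smul]
  ring

theorem omegaForm_eq_zero_of_mem_span_pair {x y p q : P2} (hxy : omegaForm x y = 0)
    (hp : p ∈ Submodule.span ℂ {x, y}) (hq : q ∈ Submodule.span ℂ {x, y}) :
    omegaForm p q = 0 := by
  obtain ⟨s, t, rfl⟩ := Submodule.mem_span_pair.1 hp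
  obtain ⟨s', t', rfl⟩ := Submodule.mem_span_pair.1 hq
  rw [omegaForm_smul_add_smul, hxy, mul_zero]

theorem omegaForm_lf_sq_mul_Xv_lf_sq_mul_Yv (a b : ℂ) :
    omegaForm (lf a b ^ 2 * Xv) (lf a b ^ 2 * Yv) = 0 := by
  have hX : lf a b ^ 2 * Xv = cubic (b ^ 2) (-2 * a * b) (a ^ 2) 0 := by
    simp only [lf, cubic, map_mul, map_pow, map_neg, map_ofNat, map_zero]
    ring
  have hY : lf a b ^ 2 * Yv = cubic 0 (b ^ 2) (-2 * a * b) (a ^ 2) := by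
    simp only [lf, cubic, map_mul, map_pow, map_neg, map_ofNat, map_zero]
    ring
  rw [hX, hY, omegaForm_cubic]
  ring

theorem isHomogeneous_lf (a b : ℂ) : (lf a b).IsHomogeneous 1 :=
  (isHomogeneous_C_mul_X _ _).sub (isHomogeneous_C_mul_X _ _)

theorem lf_ne_zero {a b : ℂ} (hab : a ≠ 0 ∨ b ≠ 0) : lf a b ≠ 0 := by
  intro h
  have hX := congrArg (coeff (Finsupp.single 0 1)) h
  have hY := congrArg (coeff (Finsupp.single 1 1)) h
  simp [lf, Xv, Yv, coeff_X, Finsupp.single_eq_single_iff] at hX hY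
  tauto

local notation "V₁" => homogeneousSubmodule (Fin 2) ℂ 1

theorem finrank_V₁ : Module.finrank ℂ V₁ = 2 := by
  rw [homogeneousSubmodule_one_eq_span_X, finrank_span_eq_card (linearIndependent_X _ _),
    Fintype.card_fin]

def sqMulLinearForms (l : P2) : Submodule ℂ P2 := Submodule.map (LinearMap.mulLeft ℂ (l ^ 2)) V₁

theorem sqMulLinearForms_eq_span (l : P2) :
    sqMulLinearForms l = Submodule.span ℂ {l ^ 2 * Xv, l ^ 2 * Yv} := by
  rw [sqMulLinearForms, homogeneousSubmodule_one_eq_span_X, Submodule.map_span, ← Set.range_comp]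
  congr 1
  ext
  simp [Fin.exists_fin_two, eq_comm, Xv, Yv]

theorem L₁_eq_sqMulLinearForms : L₁ = sqMulLinearForms Xv := by
  rw [sqMulLinearForms_eq_span, L₁, ← pow_succ]

theorem finrank_sqMulLinearForms {l : P2} (hl : l ≠ 0) :
    Module.finrank ℂ (sqMulLinearForms l) = 2 := by
  rw [sqMulLinearForms, ← (Submodule.equivMapOfInjective _
    (mul_right_injective₀ (pow_ne_zero 2 hl)) _).finrank_eq, finrank_V₁]

theorem sqMulLinearForms_le_Vcubic {l : P2} (hl : l.IsHomogeneous 1) :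
    sqMulLinearForms l ≤ Vcubic := by
  rintro _ ⟨r, hr, rfl⟩
  exact (hl.pow 2).mul hr

theorem isLagrangian_sqMulLinearForms_lf {a b : ℂ} (hab : a ≠ 0 ∨ b ≠ 0) :
    IsLagrangian (sqMulLinearForms (lf a b)) := by
  refine ⟨sqMulLinearForms_le_Vcubic (isHomogeneous_lf a b),
    finrank_sqMulLinearForms (lf_ne_zero hab), fun p hp q hq => ?_⟩
  rw [sqMulLinearForms_eq_span] at hp hq
  exact omegaForm_eq_zero_of_mem_span_pair (omegaForm_lf_sq_mul_Xv_lf_sq_mul_Yv a b) hp hq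

theorem mem_sqMulLinearForms_of_sq_dvd {l p : P2} (hl : l.IsHomogeneous 1) (hp : p ∈ Vcubic)
    (hdvd : l ^ 2 ∣ p) : p ∈ sqMulLinearForms l := by
  obtain ⟨q, rfl⟩ := hdvd
  refine ⟨homogeneousComponent 1 q, homogeneousComponent_isHomogeneous 1 q, ?_⟩
  rw [LinearMap.mulLeft_apply, ← (hl.pow 2).homogeneousComponent_add_mul]
  exact homogeneousComponent_eq_self hp

theorem subst_X (g : Matrix.SpecialLinearGroup (Fin 2) ℂ) (i : Fin 2) :
    subst g (X i) = C (g i 0) * Xv + C (g i 1) * Yv := by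
  simp [subst]

theorem subst_Xv (g : Matrix.SpecialLinearGroup (Fin 2) ℂ) :
    subst g Xv = lf (-g 0 1) (g 0 0) := by
  rw [Xv, subst_X, lf, map_neg]
  ring

theorem subst_comp_subst (g h : Matrix.SpecialLinearGroup (Fin 2) ℂ) :
    (subst g).comp (subst h) = subst (h * g) := by
  refine algHom_ext fun i => ?_
  simp only [AlgHom.comp_apply, subst_X, Xv, Yv, map_add, map_mul, algHom_C,
    Matrix.SpecialLinearGroup.coe_mul, Matrix.mul_apply, Fin.sum_univ_two]
  simp only [algebraMap_eq]
  ring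

theorem subst_one : subst 1 = AlgHom.id ℂ P2 := by
  refine algHom_ext fun i => ?_
  fin_cases i <;> simp [subst_X, Xv, Yv]

theorem map_subst_V₁ (g : Matrix.SpecialLinearGroup (Fin 2) ℂ) :
    Submodule.map (subst g).toLinearMap V₁ = V₁ := by
  have hle (g : Matrix.SpecialLinearGroup (Fin 2) ℂ) :
      Submodule.map (subst g).toLinearMap V₁ ≤ V₁ := by
    rintro _ ⟨r, hr, rfl⟩
    exact (hr : r.IsHomogeneous 1).aeval _ fun i =>
      (isHomogeneous_C_mul_X _ _).add (isHomogeneous_C_mul_X _ _)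
  refine (hle g).antisymm fun r hr => ⟨subst g⁻¹ r, hle g⁻¹ ⟨r, hr, rfl⟩, ?_⟩
  rw [AlgHom.toLinearMap_apply, ← AlgHom.comp_apply, subst_comp_subst, inv_mul_cancel, subst_one,
    AlgHom.id_apply]

theorem mapAct_sqMulLinearForms (g : Matrix.SpecialLinearGroup (Fin 2) ℂ) (l : P2) :
    mapAct g (sqMulLinearForms l) = sqMulLinearForms (subst g l) := by
  rw [mapAct, sqMulLinearForms, sqMulLinearForms, ← Submodule.map_comp]
  conv_rhs => rw [← map_subst_V₁ g, ← Submodule.map_comp]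
  congr 1
  ext p
  simp

theorem exists_subst_Xv_eq_lf {a b : ℂ} (hab : a ≠ 0 ∨ b ≠ 0) :
    ∃ g : Matrix.SpecialLinearGroup (Fin 2) ℂ, subst g Xv = lf a b := by
  obtain ⟨c, d, hcd⟩ : ∃ c d : ℂ, b * d + a * c = 1 := by
    rcases hab with ha | hb
    · exact ⟨a⁻¹, 0, by field_simp; ring⟩
    · exact ⟨0, b⁻¹, by field_simp; ring⟩
  let g : Matrix.SpecialLinearGroup (Fin 2) ℂ :=
    ⟨!![b, -a; c, d], by rw [Matrix.det_fin_two_of]; linear_combination hcd⟩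
  refine ⟨g, ?_⟩
  rw [subst_Xv]
  simp [g]

/-- The `SL(2,ℂ)`-orbit of `span{X³, X²Y}` is exactly the set of
Lagrangians `W` of `V` all of whose elements share a common double root, i.e. such that
there is `[a:b] ∈ ℂℙ¹` with `(bX-aY)²` dividing every element of `W`. -/
theorem statement6 :
    slOrbit L₁ =
      {W : Submodule ℂ P2 | IsLagrangian W ∧
        ∃ a b : ℂ, (a ≠ 0 ∨ b ≠ 0) ∧ ∀ p ∈ W, lf a b ^ 2 ∣ p} := by
  ext W
  constructor
  · rintro ⟨g, rfl⟩
    have hrow : -g 0 1 ≠ 0 ∨ g 0 0 ≠ 0 := by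
      by_contra! h
      have hdet := g.det_coe
      rw [Matrix.det_fin_two, neg_eq_zero.1 h.1, h.2] at hdet
      simp at hdet
    rw [L₁_eq_sqMulLinearForms, mapAct_sqMulLinearForms, subst_Xv]
    refine ⟨isLagrangian_sqMulLinearForms_lf hrow, _, _, hrow, ?_⟩
    rintro _ ⟨r, -, rfl⟩
    exact dvd_mul_right _ r
  · rintro ⟨⟨hWV, hW2, -⟩, a, b, hab, hdvd⟩
    obtain ⟨g, hg⟩ := exists_subst_Xv_eq_lf hab
    have hfin : Module.finrank ℂ (sqMulLinearForms (lf a b)) = 2 :=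
      finrank_sqMulLinearForms (lf_ne_zero hab)
    have : FiniteDimensional ℂ (sqMulLinearForms (lf a b)) := .of_finrank_pos (by omega)
    refine ⟨g, ?_⟩
    rw [L₁_eq_sqMulLinearForms, mapAct_sqMulLinearForms, hg]
    refine Submodule.eq_of_le_of_finrank_eq (fun p hp => ?_) (by rw [hW2, hfin])
    exact mem_sqMulLinearForms_of_sq_dvd (isHomogeneous_lf a b) (hWV hp) (hdvd p hp)
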